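/- arXiv:2206.11556 — 2 statements merged into one kernel-verified Lean document; each statement's English description precedes it below -/
import Mathlib

section
/- Suppose each local model performs at most X-1 SGD steps with step sizes φ_s satisfying φ_s ≤ 2φ_t (step sizes between the last synchronization t₀ and current time t, with t - t₀ ≤ X - 1), and all stochastic gradients satisfy ‖∇f_n(θ, ξ)‖ ≤ G. Then for weights p_n ≥ 0 summing to 1, Σ_n p_n ‖θ̄_t - θ_t^n‖² ≤ 4φ_t²(X-1)²G², where θ_t^n = θ̄_{t₀} - Σ_{s=t₀}^{t-1} φ_s ∇f_n(θ_s^n, ξ_s^n) and θ̄_t = Σ_n p_n θ_t^n. -/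
/-- Bounded divergence of local models between synchronizations (eq. 52):
    Σₙ pₙ‖θ̄_t - θ_tⁿ‖² ≤ 4φ_t²(X-1)²G². -/
theorem stmt_6 {d N : ℕ} (X t₀ t : ℕ) (hX : 1 ≤ X) (ht₀ : t₀ ≤ t)
    (hdrift : t - t₀ ≤ X - 1)
    (φ : ℕ → ℝ) (hφ : ∀ s, 0 ≤ φ s)
    (hφ2 : ∀ s, t₀ ≤ s → s < t → φ s ≤ 2 * φ t)
    (G : ℝ) (g : Fin N → ℕ → EuclideanSpace ℝ (Fin d))
    (hG : ∀ n s, t₀ ≤ s → s < t → ‖g n s‖ ≤ G)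
    (p : Fin N → ℝ) (hp : ∀ n, 0 ≤ p n) (hsum : ∑ n, p n = 1)
    (θbar₀ : EuclideanSpace ℝ (Fin d))
    (θ : Fin N → EuclideanSpace ℝ (Fin d))
    (hθ : ∀ n, θ n = θbar₀ - ∑ s ∈ Finset.Ico t₀ t, φ s • g n s) :
    ∑ n, p n * ‖(∑ m, p m • θ m) - θ n‖ ^ 2 ≤
      4 * φ t ^ 2 * ((X - 1 : ℕ) : ℝ) ^ 2 * G ^ 2 := by
  have hN : 0 < N := by
    by_contra h
    push_neg at h
    interval_cases N
    simp at hsum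
  set θbar : EuclideanSpace ℝ (Fin d) := ∑ m, p m • θ m with hθbar
  -- mean property
  have hmean : ∑ n, p n • (θbar - θ n) = 0 := by
    simp only [smul_sub, Finset.sum_sub_distrib, ← Finset.sum_smul, hsum, one_smul]
    simp [hθbar]
  -- variance ≤ second moment about θbar₀
  have key : ∑ n, p n * ‖θbar - θ n‖ ^ 2 ≤ ∑ n, p n * ‖θbar₀ - θ n‖ ^ 2 := by
    have expand : ∀ n, ‖θbar₀ - θ n‖ ^ 2
        = ‖θbar₀ - θbar‖ ^ 2 + 2 * (inner ℝ (θbar₀ - θbar) (θbar - θ n) : ℝ)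
          + ‖θbar - θ n‖ ^ 2 := by
      intro n
      have h : θbar₀ - θ n = (θbar₀ - θbar) + (θbar - θ n) := by abel
      rw [h, norm_add_sq_real]
    have cross : ∑ n, p n * (2 * (inner ℝ (θbar₀ - θbar) (θbar - θ n) : ℝ)) = 0 := by
      have : ∑ n, p n * (inner ℝ (θbar₀ - θbar) (θbar - θ n) : ℝ)
          = (inner ℝ (θbar₀ - θbar) (∑ n, p n • (θbar - θ n)) : ℝ) := by
        rw [inner_sum]
        exact Finset.sum_congr rfl fun n _ => (real_inner_smul_right _ _ _).symm
      calc ∑ n, p n * (2 * (inner ℝ (θbar₀ - θbar) (θbar - θ n) : ℝ))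
          = 2 * ∑ n, p n * (inner ℝ (θbar₀ - θbar) (θbar - θ n) : ℝ) := by
            rw [Finset.mul_sum]; congr 1; ext n; ring
        _ = 0 := by rw [this, hmean, inner_zero_right]; ring
    have : ∑ n, p n * ‖θbar₀ - θ n‖ ^ 2
        = (∑ n, p n * ‖θbar₀ - θbar‖ ^ 2)
          + (∑ n, p n * (2 * (inner ℝ (θbar₀ - θbar) (θbar - θ n) : ℝ)))
          + ∑ n, p n * ‖θbar - θ n‖ ^ 2 := by
      rw [← Finset.sum_add_distrib, ← Finset.sum_add_distrib]
      congr 1; ext n; rw [expand n]; ring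
    rw [this, cross]
    have h1 : 0 ≤ ∑ n, p n * ‖θbar₀ - θbar‖ ^ 2 :=
      Finset.sum_nonneg fun n _ => mul_nonneg (hp n) (by positivity)
    linarith
  rcases eq_or_lt_of_le ht₀ with heq | hlt
  · -- no local steps: all θ n = θbar₀
    have hθeq : ∀ n, θ n = θbar₀ := by
      intro n; rw [hθ n, heq]; simp
    have : ∑ n, p n * ‖θbar - θ n‖ ^ 2 = 0 := by
      have : θbar = θbar₀ := by
        rw [hθbar]
        simp only [hθeq, ← Finset.sum_smul, hsum, one_smul]
      apply Finset.sum_eq_zero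
      intro n _
      rw [this, hθeq n]
      simp
    rw [this]
    positivity
  · -- main case: t₀ < t
    have hG0 : 0 ≤ G := le_trans (norm_nonneg _) (hG ⟨0, hN⟩ t₀ le_rfl hlt)
    have hφt : 0 ≤ φ t := hφ t
    set B : ℝ := ((X - 1 : ℕ) : ℝ) * (2 * φ t * G) with hB
    have hBnn : 0 ≤ B := by positivity
    have hbound : ∀ n : Fin N, ‖θbar₀ - θ n‖ ≤ B := by
      intro n
      rw [hθ n]
      have h1 : θbar₀ - (θbar₀ - ∑ s ∈ Finset.Ico t₀ t, φ s • g n s)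
          = ∑ s ∈ Finset.Ico t₀ t, φ s • g n s := by abel
      rw [h1]
      calc ‖∑ s ∈ Finset.Ico t₀ t, φ s • g n s‖
          ≤ ∑ s ∈ Finset.Ico t₀ t, ‖φ s • g n s‖ := norm_sum_le _ _
        _ ≤ ∑ s ∈ Finset.Ico t₀ t, 2 * φ t * G := by
            apply Finset.sum_le_sum
            intro s hs
            rw [Finset.mem_Ico] at hs
            rw [norm_smul, Real.norm_eq_abs, abs_of_nonneg (hφ s)]
            have := hG n s hs.1 hs.2
            have := hφ2 s hs.1 hs.2
            calc φ s * ‖g n s‖ ≤ (2 * φ t) * G := by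
                  apply mul_le_mul ‹φ s ≤ 2 * φ t› ‹‖g n s‖ ≤ G› (norm_nonneg _)
                  positivity
              _ = 2 * φ t * G := by ring
        _ = ((t - t₀ : ℕ) : ℝ) * (2 * φ t * G) := by
            rw [Finset.sum_const, Nat.card_Ico, nsmul_eq_mul]
        _ ≤ B := by
            rw [hB]
            apply mul_le_mul_of_nonneg_right _ (by positivity)
            exact_mod_cast hdrift
    calc ∑ n, p n * ‖θbar - θ n‖ ^ 2
        ≤ ∑ n, p n * ‖θbar₀ - θ n‖ ^ 2 := key
      _ ≤ ∑ n, p n * B ^ 2 := by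
          apply Finset.sum_le_sum
          intro n _
          exact mul_le_mul_of_nonneg_left
            (pow_le_pow_left₀ (norm_nonneg _) (hbound n) 2) (hp n)
      _ = B ^ 2 := by rw [← Finset.sum_mul, hsum, one_mul]
      _ = 4 * φ t ^ 2 * ((X - 1 : ℕ) : ℝ) ^ 2 * G ^ 2 := by rw [hB]; ring
end

section
/- Let f_n : ℝ^d → ℝ (n = 1..N) each be β-smooth and μ-strongly convex, p_n ≥ 0 with Σ p_n = 1, f = Σ p_n f_n with global minimizer θ* and minimum f*. Let θ̄, θ¹,...,θ^N ∈ ℝ^d with θ̄ = Σ p_n θ^n, step size φ ≤ 1/(4β), and ḡ = Σ p_n ∇f_n(θ^n). Then ‖θ̄ - φḡ - θ*‖² ≤ (1-μφ)‖θ̄ - θ*‖² + 6βφ²Φ + 2Σ p_n ‖θ^n - θ̄‖², where Φ = f* - Σ p_n f_n* and f_n* = inf f_n. -/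
open Finset RealInnerProductSpace

variable {E : Type*} [NormedAddCommGroup E] [InnerProductSpace ℝ E] [CompleteSpace E]

/-- derivative of the line restriction -/
lemma line_hasDerivAt (g : E → ℝ) (hg : Differentiable ℝ g) (x v : E) (t : ℝ) :
    HasDerivAt (fun s : ℝ => g (x + s • v)) ⟪gradient g (x + t • v), v⟫ t := by
  have hline : HasDerivAt (fun s : ℝ => x + s • v) v t := by
    simpa using ((hasDerivAt_id t).smul_const v).const_add x
  have h1 := ((hg (x + t • v)).hasGradientAt.hasFDerivAt).comp_hasDerivAt t hline
  rw [InnerProductSpace.toDual_apply_apply] at h1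
  exact h1

/-- Descent lemma. -/
lemma descent_lemma (g : E → ℝ) (β : ℝ) (hβ : 0 < β) (hg : Differentiable ℝ g)
    (hlip : ∀ x y, ‖gradient g x - gradient g y‖ ≤ β * ‖x - y‖) (x y : E) :
    g y ≤ g x + ⟪gradient g x, y - x⟫ + β / 2 * ‖y - x‖ ^ 2 := by
  set v := y - x with hv
  set h : ℝ → ℝ := fun t => g (x + t • v) - t * ⟪gradient g x, v⟫ - β / 2 * ‖v‖ ^ 2 * t ^ 2
    with hh
  have hder : ∀ t : ℝ, HasDerivAt h
      (⟪gradient g (x + t • v), v⟫ - ⟪gradient g x, v⟫ - β * ‖v‖ ^ 2 * t) t := by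
    intro t
    have h1 := line_hasDerivAt g hg x v t
    have h2 : HasDerivAt (fun t : ℝ => t * ⟪gradient g x, v⟫) ⟪gradient g x, v⟫ t := by
      simpa using (hasDerivAt_id t).mul_const _
    have h3 : HasDerivAt (fun t : ℝ => β / 2 * ‖v‖ ^ 2 * t ^ 2) (β * ‖v‖ ^ 2 * t) t := by
      have := (hasDerivAt_pow 2 t).const_mul (β / 2 * ‖v‖ ^ 2)
      refine this.congr_deriv ?_
      norm_num
      ring
    exact (h1.sub h2).sub h3
  have hdiffh : Differentiable ℝ h := fun t => (hder t).differentiableAt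
  have hanti : AntitoneOn h (Set.Icc 0 1) := by
    apply antitoneOn_of_deriv_nonpos (convex_Icc 0 1) hdiffh.continuous.continuousOn
      hdiffh.differentiableOn
    intro t ht
    rw [interior_Icc] at ht
    rw [(hder t).deriv]
    have e1 : ⟪gradient g (x + t • v), v⟫ - ⟪gradient g x, v⟫
        = ⟪gradient g (x + t • v) - gradient g x, v⟫ := by
      rw [inner_sub_left]
    have e2 : ⟪gradient g (x + t • v) - gradient g x, v⟫
        ≤ ‖gradient g (x + t • v) - gradient g x‖ * ‖v‖ := real_inner_le_norm _ _
    have e3 : ‖gradient g (x + t • v) - gradient g x‖ ≤ β * (t * ‖v‖) := by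
      have := hlip (x + t • v) x
      simpa [norm_smul, abs_of_nonneg ht.1.le] using this
    have hv0 : (0:ℝ) ≤ ‖v‖ := norm_nonneg _
    nlinarith [mul_le_mul_of_nonneg_right e3 hv0]
  have h01 := hanti (Set.mem_Icc.mpr ⟨le_refl 0, zero_le_one⟩)
    (Set.mem_Icc.mpr ⟨zero_le_one, le_refl 1⟩) zero_le_one
  simp only [hh] at h01
  have : x + (1:ℝ) • v = y := by simp [hv]
  rw [this] at h01
  simp at h01
  linarith [inner_gradient_left (𝕜 := ℝ) (f := g) (x := x) (y := v)]
/-- gradient norm squared bounded by function gap -/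
lemma grad_sq_le (g : E → ℝ) (β : ℝ) (hβ : 0 < β) (hg : Differentiable ℝ g)
    (hlip : ∀ x y, ‖gradient g x - gradient g y‖ ≤ β * ‖x - y‖) (z : E)
    (hz : ∀ x, g z ≤ g x) (x : E) :
    ‖gradient g x‖ ^ 2 ≤ 2 * β * (g x - g z) := by
  have h1 := descent_lemma g β hβ hg hlip x (x - β⁻¹ • gradient g x)
  have h2 := hz (x - β⁻¹ • gradient g x)
  rw [show x - β⁻¹ • gradient g x - x = -(β⁻¹ • gradient g x) by abel] at h1
  rw [inner_neg_right, real_inner_smul_right, real_inner_self_eq_norm_sq] at h1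
  rw [norm_neg, norm_smul] at h1
  rw [Real.norm_eq_abs, abs_of_pos (show (0:ℝ) < β⁻¹ by positivity)] at h1
  have e : g x + -(β⁻¹ * ‖gradient g x‖ ^ 2) + β / 2 * (β⁻¹ * ‖gradient g x‖) ^ 2
      = g x - 1 / (2 * β) * ‖gradient g x‖ ^ 2 := by
    field_simp; ring
  rw [e] at h1
  have h4 : 1 / (2 * β) * ‖gradient g x‖ ^ 2 ≤ g x - g z := by linarith
  calc ‖gradient g x‖ ^ 2 = 2 * β * (1 / (2 * β) * ‖gradient g x‖ ^ 2) := by field_simp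
    _ ≤ 2 * β * (g x - g z) := by
        exact mul_le_mul_of_nonneg_left h4 (by positivity)

/-- Jensen for norm squared -/
lemma jensen_norm_sq {N : ℕ} (p : Fin N → ℝ) (hp : ∀ n, 0 ≤ p n) (hsum : ∑ n, p n = 1)
    (x : Fin N → E) :
    ‖∑ n, p n • x n‖ ^ 2 ≤ ∑ n, p n * ‖x n‖ ^ 2 := by
  set m := ∑ n, p n • x n with hm
  have key : ∑ n, p n * ‖x n - m‖ ^ 2 = (∑ n, p n * ‖x n‖ ^ 2) - ‖m‖ ^ 2 := by
    have e1 : ∀ n, p n * ‖x n - m‖ ^ 2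
        = p n * ‖x n‖ ^ 2 - 2 * (p n * ⟪x n, m⟫) + p n * ‖m‖ ^ 2 := by
      intro n
      have : ‖x n - m‖ ^ 2 = ‖x n‖ ^ 2 - 2 * ⟪x n, m⟫ + ‖m‖ ^ 2 := by
        rw [@norm_sub_sq_real]
      rw [this]; ring
    rw [Finset.sum_congr rfl (fun n _ => e1 n)]
    rw [Finset.sum_add_distrib, Finset.sum_sub_distrib]
    have e2 : ∑ n, p n * ⟪x n, m⟫ = ‖m‖ ^ 2 := by
      have : ⟪m, m⟫ = ∑ n, p n * ⟪x n, m⟫ := by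
        rw [hm, sum_inner]
        exact Finset.sum_congr rfl fun n _ => real_inner_smul_left _ _ _
      rw [← this, real_inner_self_eq_norm_sq]
    have e3 : ∑ n, 2 * (p n * ⟪x n, m⟫) = 2 * ‖m‖ ^ 2 := by
      rw [← Finset.mul_sum, e2]
    have e4 : (∑ n, p n * ‖m‖ ^ 2) = ‖m‖ ^ 2 := by
      rw [← Finset.sum_mul, hsum, one_mul]
    rw [e3, e4]; ring
  have hpos : 0 ≤ ∑ n, p n * ‖x n - m‖ ^ 2 :=
    Finset.sum_nonneg fun n _ => mul_nonneg (hp n) (by positivity)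
  linarith [key ▸ hpos]

/-- Deterministic one-step descent bound (eq. 51) for federated SGD. -/
theorem stmt_7 {d N : ℕ} (f : Fin N → EuclideanSpace ℝ (Fin d) → ℝ) (β μ : ℝ)
    (hβ : 0 < β) (hμ : 0 < μ)
    (hdiff : ∀ n, Differentiable ℝ (f n))
    (hsmooth : ∀ n x y, ‖gradient (f n) x - gradient (f n) y‖ ≤ β * ‖x - y‖)
    (hsc : ∀ n x y, f n y ≥ f n x + (inner ℝ (gradient (f n) x) (y - x) : ℝ)
      + μ / 2 * ‖y - x‖ ^ 2)
    (p : Fin N → ℝ) (hp : ∀ n, 0 ≤ p n) (hsum : ∑ n, p n = 1)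
    (θstar : EuclideanSpace ℝ (Fin d))
    (hθstar : ∀ x, ∑ n, p n * f n θstar ≤ ∑ n, p n * f n x)
    (xmin : Fin N → EuclideanSpace ℝ (Fin d))
    (hxmin : ∀ n x, f n (xmin n) ≤ f n x)
    (θ : Fin N → EuclideanSpace ℝ (Fin d))
    (θbar : EuclideanSpace ℝ (Fin d)) (hθbar : θbar = ∑ n, p n • θ n)
    (φ : ℝ) (hφ : 0 < φ) (hφβ : φ ≤ 1 / (4 * β))
    (gbar : EuclideanSpace ℝ (Fin d)) (hgbar : gbar = ∑ n, p n • gradient (f n) (θ n)) :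
    ‖θbar - φ • gbar - θstar‖ ^ 2 ≤
      (1 - μ * φ) * ‖θbar - θstar‖ ^ 2
        + 6 * β * φ ^ 2 * ((∑ n, p n * f n θstar) - ∑ n, p n * f n (xmin n))
        + 2 * ∑ n, p n * ‖θ n - θbar‖ ^ 2 := by
  -- step-size bound as a product
  have ht : β * φ ≤ 1 / 4 := by
    have h := mul_le_mul_of_nonneg_left hφβ hβ.le
    rw [show β * (1 / (4 * β)) = 1 / 4 by field_simp] at h
    exact h
  have hlam : (0:ℝ) ≤ 1 - 2 * (β * φ) := by linarith
  -- expansion of the left-hand side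
  have hL : ‖θbar - φ • gbar - θstar‖ ^ 2
      = ‖θbar - θstar‖ ^ 2 - 2 * φ * ⟪θbar - θstar, gbar⟫ + φ ^ 2 * ‖gbar‖ ^ 2 := by
    have e : θbar - φ • gbar - θstar = (θbar - θstar) - φ • gbar := by abel
    rw [e, norm_sub_sq_real, real_inner_smul_right, norm_smul, Real.norm_eq_abs,
      abs_of_pos hφ]
    ring
  -- inner product as a sum
  have hinner : ⟪θbar - θstar, gbar⟫
      = ∑ n, p n * ⟪θbar - θstar, gradient (f n) (θ n)⟫ := by
    rw [hgbar, inner_sum]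
    exact Finset.sum_congr rfl fun n _ => real_inner_smul_right _ _ _
  -- c1 : key cross-term bound
  have c1 : -(2 * φ * ⟪θbar - θstar, gbar⟫)
      ≤ (∑ n, p n * ‖θ n - θbar‖ ^ 2)
        + φ ^ 2 * (∑ n, p n * ‖gradient (f n) (θ n)‖ ^ 2)
        + 2 * φ * ((∑ n, p n * f n θstar) - ∑ n, p n * f n (θ n))
        - μ * φ * (∑ n, p n * ‖θ n - θstar‖ ^ 2) := by
    have per : ∀ n, -(2 * φ * (p n * ⟪θbar - θstar, gradient (f n) (θ n)⟫))
        ≤ p n * ‖θ n - θbar‖ ^ 2 + φ ^ 2 * (p n * ‖gradient (f n) (θ n)‖ ^ 2)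
          + 2 * φ * (p n * f n θstar - p n * f n (θ n))
          - μ * φ * (p n * ‖θ n - θstar‖ ^ 2) := by
      intro n
      set g := gradient (f n) (θ n) with hgdef
      have s1 : ⟪θbar - θstar, g⟫ = ⟪θbar - θ n, g⟫ + ⟪θ n - θstar, g⟫ := by
        rw [← inner_add_left]
        congr 1
        abel
      have e0 : (0:ℝ) ≤ ‖(θ n - θbar) - φ • g‖ ^ 2 := by positivity
      rw [norm_sub_sq_real, real_inner_smul_right, norm_smul, Real.norm_eq_abs,
        abs_of_pos hφ] at e0
      have esym : ⟪θ n - θbar, g⟫ = -⟪θbar - θ n, g⟫ := by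
        rw [← inner_neg_left]
        congr 1
        abel
      rw [esym] at e0
      -- e0 : 0 ≤ ‖θ n - θbar‖^2 - 2*(φ * -⟪θbar - θ n, g⟫) + (φ*‖g‖)^2
      have s3 : ⟪g, θstar - θ n⟫ ≤ f n θstar - f n (θ n) - μ / 2 * ‖θstar - θ n‖ ^ 2 := by
        have := hsc n (θ n) θstar
        linarith
      have esym2 : ⟪θ n - θstar, g⟫ = -⟪g, θstar - θ n⟫ := by
        rw [real_inner_comm, ← inner_neg_right]
        congr 1
        abel
      have enorm : ‖θstar - θ n‖ = ‖θ n - θstar‖ := norm_sub_rev _ _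
      rw [enorm] at s3
      -- scalar inequality without the weight
      have scal : -(2 * φ * ⟪θbar - θstar, g⟫)
          ≤ ‖θ n - θbar‖ ^ 2 + φ ^ 2 * ‖g‖ ^ 2
            + 2 * φ * (f n θstar - f n (θ n)) - μ * φ * ‖θ n - θstar‖ ^ 2 := by
        rw [s1, esym2]
        have h3 := mul_le_mul_of_nonneg_left s3 (by positivity : (0:ℝ) ≤ 2 * φ)
        linarith [e0, h3]
      have := mul_le_mul_of_nonneg_left scal (hp n)
      linarith [this]
    have csum := Finset.sum_le_sum (fun n (_ : n ∈ Finset.univ) => per n)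
    have lhs_eq : ∑ n, -(2 * φ * (p n * ⟪θbar - θstar, gradient (f n) (θ n)⟫))
        = -(2 * φ * ⟪θbar - θstar, gbar⟫) := by
      rw [hinner, Finset.mul_sum, ← Finset.sum_neg_distrib]
    have rhs_eq : ∑ n, (p n * ‖θ n - θbar‖ ^ 2 + φ ^ 2 * (p n * ‖gradient (f n) (θ n)‖ ^ 2)
          + 2 * φ * (p n * f n θstar - p n * f n (θ n))
          - μ * φ * (p n * ‖θ n - θstar‖ ^ 2))
        = (∑ n, p n * ‖θ n - θbar‖ ^ 2)
          + φ ^ 2 * (∑ n, p n * ‖gradient (f n) (θ n)‖ ^ 2)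
          + 2 * φ * ((∑ n, p n * f n θstar) - ∑ n, p n * f n (θ n))
          - μ * φ * (∑ n, p n * ‖θ n - θstar‖ ^ 2) := by
      simp only [Finset.sum_add_distrib, Finset.sum_sub_distrib, ← Finset.mul_sum, mul_sub]
    rw [lhs_eq, rhs_eq] at csum
    exact csum
  -- c2 : Jensen for the iterate distances
  have c2 : ‖θbar - θstar‖ ^ 2 ≤ ∑ n, p n * ‖θ n - θstar‖ ^ 2 := by
    have h := jensen_norm_sq p hp hsum (fun n => θ n - θstar)
    have e : ∑ n, p n • (θ n - θstar) = θbar - θstar := by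
      simp only [smul_sub]
      rw [Finset.sum_sub_distrib, ← Finset.sum_smul, hsum, one_smul, ← hθbar]
    rwa [e] at h
  -- c3 : gradient-norm bound at the iterates
  have c3 : (∑ n, p n * ‖gradient (f n) (θ n)‖ ^ 2)
      ≤ 2 * β * ((∑ n, p n * f n (θ n)) - ∑ n, p n * f n (xmin n)) := by
    have h := Finset.sum_le_sum (fun n (_ : n ∈ Finset.univ) =>
      mul_le_mul_of_nonneg_left
        (grad_sq_le (f n) β hβ (hdiff n) (hsmooth n) (xmin n) (hxmin n) (θ n)) (hp n))
    have e : ∑ n, p n * (2 * β * (f n (θ n) - f n (xmin n)))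
        = 2 * β * ((∑ n, p n * f n (θ n)) - ∑ n, p n * f n (xmin n)) := by
      rw [mul_sub, Finset.mul_sum, Finset.mul_sum, ← Finset.sum_sub_distrib]
      exact Finset.sum_congr rfl fun n _ => by ring
    rwa [e] at h
  -- c4 : gradient-norm bound at the average
  have c4 : (∑ n, p n * ‖gradient (f n) θbar‖ ^ 2)
      ≤ 2 * β * ((∑ n, p n * f n θbar) - ∑ n, p n * f n (xmin n)) := by
    have h := Finset.sum_le_sum (fun n (_ : n ∈ Finset.univ) =>
      mul_le_mul_of_nonneg_left
        (grad_sq_le (f n) β hβ (hdiff n) (hsmooth n) (xmin n) (hxmin n) θbar) (hp n))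
    have e : ∑ n, p n * (2 * β * (f n θbar - f n (xmin n)))
        = 2 * β * ((∑ n, p n * f n θbar) - ∑ n, p n * f n (xmin n)) := by
      rw [mul_sub, Finset.mul_sum, Finset.mul_sum, ← Finset.sum_sub_distrib]
      exact Finset.sum_congr rfl fun n _ => by ring
    rwa [e] at h
  -- c5 : convexity bound relating the average to the iterates
  have c5 : 2 * φ * ((∑ n, p n * f n θbar) - ∑ n, p n * f n (θ n))
      ≤ (∑ n, p n * ‖θ n - θbar‖ ^ 2)
        + φ ^ 2 * (∑ n, p n * ‖gradient (f n) θbar‖ ^ 2) := by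
    have per : ∀ n, 2 * φ * (p n * f n θbar - p n * f n (θ n))
        ≤ p n * ‖θ n - θbar‖ ^ 2 + φ ^ 2 * (p n * ‖gradient (f n) θbar‖ ^ 2) := by
      intro n
      set h := gradient (f n) θbar with hhdef
      have conv : f n θbar - f n (θ n) ≤ -⟪h, θ n - θbar⟫ := by
        have := hsc n θbar (θ n)
        linarith [this, mul_nonneg hμ.le (sq_nonneg ‖θ n - θbar‖)]
      have e0 : (0:ℝ) ≤ ‖(θ n - θbar) + φ • h‖ ^ 2 := by positivity
      rw [norm_add_sq_real, real_inner_smul_right, norm_smul, Real.norm_eq_abs,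
        abs_of_pos hφ] at e0
      have esym : ⟪h, θ n - θbar⟫ = ⟪θ n - θbar, h⟫ := real_inner_comm _ _
      rw [esym] at conv
      have scal : 2 * φ * (f n θbar - f n (θ n))
          ≤ ‖θ n - θbar‖ ^ 2 + φ ^ 2 * ‖h‖ ^ 2 := by
        have h3 := mul_le_mul_of_nonneg_left conv (by positivity : (0:ℝ) ≤ 2 * φ)
        linarith [e0, h3]
      have := mul_le_mul_of_nonneg_left scal (hp n)
      linarith [this]
    have csum := Finset.sum_le_sum (fun n (_ : n ∈ Finset.univ) => per n)
    have lhs_eq : ∑ n, 2 * φ * (p n * f n θbar - p n * f n (θ n))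
        = 2 * φ * ((∑ n, p n * f n θbar) - ∑ n, p n * f n (θ n)) := by
      rw [mul_sub, Finset.mul_sum, Finset.mul_sum, ← Finset.sum_sub_distrib]
      exact Finset.sum_congr rfl fun n _ => by ring
    have rhs_eq : ∑ n, (p n * ‖θ n - θbar‖ ^ 2 + φ ^ 2 * (p n * ‖gradient (f n) θbar‖ ^ 2))
        = (∑ n, p n * ‖θ n - θbar‖ ^ 2)
          + φ ^ 2 * (∑ n, p n * ‖gradient (f n) θbar‖ ^ 2) := by
      simp only [Finset.sum_add_distrib, ← Finset.mul_sum]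
    rw [lhs_eq, rhs_eq] at csum
    exact csum
  -- c6, c7 : optimality comparisons
  have c6 : (∑ n, p n * f n θstar) ≤ ∑ n, p n * f n θbar := hθstar θbar
  have c7 : (∑ n, p n * f n (xmin n)) ≤ ∑ n, p n * f n θstar :=
    Finset.sum_le_sum fun n _ => mul_le_mul_of_nonneg_left (hxmin n θstar) (hp n)
  -- c9 : Jensen for the averaged gradient
  have c9 : ‖gbar‖ ^ 2 ≤ ∑ n, p n * ‖gradient (f n) (θ n)‖ ^ 2 := by
    rw [hgbar]
    exact jensen_norm_sq p hp hsum _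
  have cB : (0:ℝ) ≤ ∑ n, p n * ‖θ n - θbar‖ ^ 2 :=
    Finset.sum_nonneg fun n _ => mul_nonneg (hp n) (by positivity)
  -- final scalar combination
  have s2 := mul_le_mul_of_nonneg_left c2 (mul_nonneg hμ.le hφ.le)
  have s9 := mul_le_mul_of_nonneg_left c9 (sq_nonneg φ)
  have s3 := mul_le_mul_of_nonneg_left c3 (by positivity : (0:ℝ) ≤ 2 * φ ^ 2)
  have s5 := mul_le_mul_of_nonneg_left c5 hlam
  have s4 := mul_le_mul_of_nonneg_left c4 (mul_nonneg hlam (sq_nonneg φ))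
  have hlam1 : (0:ℝ) ≤ 1 - β * φ := by linarith
  have s6 := mul_le_mul_of_nonneg_left c6
    (mul_nonneg (mul_nonneg (by positivity : (0:ℝ) ≤ 2 * φ) hlam) hlam1)
  have s7 := mul_le_mul_of_nonneg_left c7
    (by positivity : (0:ℝ) ≤ 4 * β ^ 2 * φ ^ 3)
  have sB := mul_le_mul_of_nonneg_left cB (by positivity : (0:ℝ) ≤ 2 * (β * φ))
  rw [hL]
  linarith [c1, s2, s9, s3, s5, s4, s6, s7, sB]
end
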